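/- arXiv:2110.15572 — 5 statements merged into one kernel-verified Lean document; each statement's English description precedes it below -/
import Mathlib

section
/- Non-uniform Łojasiewicz inequality for the softmax expected reward: for every θ ∈ ℝ^K, the Euclidean norm of the gradient of θ ↦ π_θᵀ r satisfies ‖d(π_θᵀ r)/dθ‖₂ = (Σ_{a∈[K]} π_θ(a)²·(r(a) − π_θᵀ r)²)^{1/2} ≥ π_θ(a*)·(π* − π_θ)ᵀ r = π_θ(a*)·(r(a*) − π_θᵀ r). -/
open Finset Real Filter

/-- Softmax policy: `π_θ(a) = exp(θ(a)) / Σ_{a'} exp(θ(a'))`. -/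
noncomputable def softmax {K : ℕ} (θ : Fin K → ℝ) (a : Fin K) : ℝ :=
  Real.exp (θ a) / ∑ a', Real.exp (θ a')

/-- Expected reward `π_θᵀ r`. -/
noncomputable def expReward {K : ℕ} (r θ : Fin K → ℝ) : ℝ :=
  ∑ a, softmax θ a * r a

/-- Policy gradient component `(d π_θᵀ r / dθ)(a) = π_θ(a)·(r(a) − π_θᵀ r)`. -/
noncomputable def pgrad {K : ℕ} (r θ : Fin K → ℝ) (a : Fin K) : ℝ :=
  softmax θ a * (r a - expReward r θ)

/-- Euclidean norm of the policy gradient. -/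
noncomputable def pgradNorm {K : ℕ} (r θ : Fin K → ℝ) : ℝ :=
  Real.sqrt (∑ a, pgrad r θ a ^ 2)

theorem Real.le_sqrt_sum_sq {ι : Type*} [Fintype ι] (f : ι → ℝ) (i : ι) :
    f i ≤ √(∑ j, f j ^ 2) :=
  Real.le_sqrt_of_sq_le <|
    Finset.single_le_sum (fun j _ => sq_nonneg (f j)) (Finset.mem_univ i)

theorem softmax_pg_nonuniform_lojasiewicz_general
    {K : ℕ} (r : Fin K → ℝ)
    (astar : Fin K)
    (θ : Fin K → ℝ) :
    softmax θ astar * (r astar - expReward r θ) ≤ pgradNorm r θ :=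
  Real.le_sqrt_sum_sq (pgrad r θ) astar

/-- Non-uniform Łojasiewicz inequality for the softmax expected reward:
`‖d(π_θᵀ r)/dθ‖₂ ≥ π_θ(a*)·(r(a*) − π_θᵀ r)`. -/
theorem softmax_pg_nonuniform_lojasiewicz
    {K : ℕ} (hK : 2 ≤ K) (r : Fin K → ℝ)
    (hr : ∀ a, 0 < r a ∧ r a ≤ 1)
    (astar : Fin K) (hstar : ∀ a, a ≠ astar → r a < r astar)
    (θ : Fin K → ℝ) :
    softmax θ astar * (r astar - expReward r θ) ≤ pgradNorm r θ :=
  softmax_pg_nonuniform_lojasiewicz_general r astar θ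
end

section
/- Natural non-uniform Łojasiewicz inequality (continuous form): for every θ ∈ ℝ^K, ⟨d(π_θᵀ r)/dθ, r⟩ = rᵀ(diag(π_θ) − π_θ π_θᵀ) r ≥ π_θ(a*)·Δ·(π* − π_θ)ᵀ r. -/
/-!
Write `p = softmax θ`, `μ = ∑ p a * r a` and `d a = r a* - r a`, so that `d a* = 0` and
`r a* - μ = ∑ p a * d a`.
The pairing `∑ a, pgrad r θ a * r a` is the variance of `r` under `p`, which equals
`∑ p a * d a ^ 2 - (r a* - μ) ^ 2`. Since `d` vanishes at `a*`, Cauchy–Schwarz over the other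
actions gives `(r a* - μ) ^ 2 ≤ (1 - p a*) * ∑ p a * d a ^ 2`, so the variance is at least
`p a* * ∑ p a * d a ^ 2`. Finally `d a ^ 2 ≥ Δ * d a` termwise, because every `d a` is either `0`
or at least `Δ`, and `∑ p a * d a = r a* - μ`.
-/

open Finset Real Filter

section WeightedVariance

variable {ι : Type*} [Fintype ι] (p x : ι → ℝ)

theorem sum_mul_sub_mean_mul_eq (hp : ∑ a, p a = 1) (c : ℝ) :
    ∑ a, p a * (x a - ∑ b, p b * x b) * x a
      = ∑ a, p a * (c - x a) ^ 2 - (c - ∑ b, p b * x b) ^ 2 := by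
  set μ := ∑ b, p b * x b
  have hlhs : ∀ a, p a * (x a - μ) * x a = p a * x a ^ 2 - μ * (p a * x a) := fun a => by ring
  have hrhs : ∀ a, p a * (c - x a) ^ 2 = c ^ 2 * p a - 2 * c * (p a * x a) + p a * x a ^ 2 :=
    fun a => by ring
  simp only [hlhs, hrhs, sum_add_distrib, sum_sub_distrib, ← mul_sum, hp]
  ring

theorem sub_mean_eq_sum (hp : ∑ a, p a = 1) (c : ℝ) :
    c - ∑ b, p b * x b = ∑ a, p a * (c - x a) := by
  simp only [mul_sub, sum_sub_distrib, ← sum_mul, hp, one_mul]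

theorem sq_sub_mean_le (hp0 : ∀ a, 0 ≤ p a) (hp : ∑ a, p a = 1) (i : ι) :
    (x i - ∑ b, p b * x b) ^ 2 ≤ (1 - p i) * ∑ a, p a * (x i - x a) ^ 2 := by
  classical
  have hmass : ∑ a ∈ univ.erase i, p a = 1 - p i := by
    rw [sum_erase_eq_sub (mem_univ i), hp]
  rw [sub_mean_eq_sum p x hp, ← hmass,
    ← sum_erase _ (f := fun a => p a * (x i - x a)) (a := i) (by simp),
    ← sum_erase _ (f := fun a => p a * (x i - x a) ^ 2) (a := i) (by simp)]
  exact sum_sq_le_sum_mul_sum_of_sq_le_mul _ (fun a _ => hp0 a)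
    (fun a _ => mul_nonneg (hp0 a) (sq_nonneg _)) (fun a _ => (by ring : _ = _).le)

theorem gap_mul_sub_mean_le (hp0 : ∀ a, 0 ≤ p a) (hp : ∑ a, p a = 1) {i : ι} {Δ : ℝ}
    (hmax : ∀ a, x a ≤ x i) (hgap : ∀ a, a ≠ i → Δ ≤ x i - x a) :
    Δ * (x i - ∑ b, p b * x b) ≤ ∑ a, p a * (x i - x a) ^ 2 := by
  rw [sub_mean_eq_sum p x hp, mul_sum]
  refine sum_le_sum fun a _ => ?_
  rw [mul_left_comm]
  refine mul_le_mul_of_nonneg_left ?_ (hp0 a)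
  rcases eq_or_ne a i with rfl | hai
  · simp
  · nlinarith [mul_nonneg (sub_nonneg.2 (hmax a)) (sub_nonneg.2 (hgap a hai))]

theorem mul_gap_mul_sub_mean_le_variance (hp0 : ∀ a, 0 ≤ p a)
    (hp : ∑ a, p a = 1) {i : ι} {Δ : ℝ}
    (hmax : ∀ a, x a ≤ x i) (hgap : ∀ a, a ≠ i → Δ ≤ x i - x a) :
    p i * Δ * (x i - ∑ b, p b * x b) ≤ ∑ a, p a * (x a - ∑ b, p b * x b) * x a := by
  set S := ∑ a, p a * (x i - x a) ^ 2
  have hcs := sq_sub_mean_le p x hp0 hp i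
  calc p i * Δ * (x i - ∑ b, p b * x b)
      = p i * (Δ * (x i - ∑ b, p b * x b)) := mul_assoc _ _ _
    _ ≤ p i * S := mul_le_mul_of_nonneg_left (gap_mul_sub_mean_le p x hp0 hp hmax hgap) (hp0 i)
    _ ≤ S - (x i - ∑ b, p b * x b) ^ 2 := by linarith [show (1 - p i) * S = S - p i * S by ring]
    _ = _ := (sum_mul_sub_mean_mul_eq p x hp (x i)).symm

end WeightedVariance

theorem softmax_nonneg {K : ℕ} (θ : Fin K → ℝ) (a : Fin K) : 0 ≤ softmax θ a :=
  div_nonneg (Real.exp_nonneg _) (sum_nonneg fun _ _ => Real.exp_nonneg _)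

theorem sum_softmax {K : ℕ} [NeZero K] (θ : Fin K → ℝ) : ∑ a, softmax θ a = 1 := by
  simp only [softmax, ← sum_div]
  exact div_self (sum_pos (fun _ _ => Real.exp_pos _) univ_nonempty).ne'

theorem natural_nonuniform_lojasiewicz_continuous_general
    {K : ℕ} (r : Fin K → ℝ)
    (astar : Fin K) (hstar : ∀ a, a ≠ astar → r a < r astar)
    (Δ : ℝ) (hΔ : Δ = r astar - sSup (r '' {a | a ≠ astar}))
    (θ : Fin K → ℝ) :
    softmax θ astar * Δ * (r astar - expReward r θ) ≤ ∑ a, pgrad r θ a * r a := by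
  have : NeZero K := ⟨astar.pos.ne'⟩
  have hmax : ∀ a, r a ≤ r astar := fun a => by
    rcases eq_or_ne a astar with rfl | ha
    exacts [le_rfl, (hstar a ha).le]
  have hgap : ∀ a, a ≠ astar → Δ ≤ r astar - r a := fun a ha => by
    rw [hΔ]
    exact sub_le_sub_left (le_csSup (Set.toFinite (r '' {a | a ≠ astar})).bddAbove ⟨a, ha, rfl⟩) _
  exact mul_gap_mul_sub_mean_le_variance (softmax θ) r (softmax_nonneg θ)
    (sum_softmax θ) hmax hgap

/-- Natural non-uniform Łojasiewicz inequality (continuous form):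
`⟨d(π_θᵀ r)/dθ, r⟩ ≥ π_θ(a*)·Δ·(r(a*) − π_θᵀ r)`,
where `Δ = r(a*) − max_{a ≠ a*} r(a)` is the reward gap. -/
theorem natural_nonuniform_lojasiewicz_continuous
    {K : ℕ} (hK : 2 ≤ K) (r : Fin K → ℝ)
    (hr : ∀ a, 0 < r a ∧ r a ≤ 1)
    (astar : Fin K) (hstar : ∀ a, a ≠ astar → r a < r astar)
    (Δ : ℝ) (hΔ : Δ = r astar - sSup (r '' {a | a ≠ astar}))
    (θ : Fin K → ℝ) :
    softmax θ astar * Δ * (r astar - expReward r θ) ≤ ∑ a, pgrad r θ a * r a :=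
  natural_nonuniform_lojasiewicz_continuous_general r astar hstar Δ hΔ θ
end

section
/- Natural non-uniform Łojasiewicz inequality (discrete form): let π be any probability distribution on [K], let η > 0, and define the exponentiated update π'(a) := π(a)·e^{η·r(a)} / Σ_{a'} π(a')·e^{η·r(a')} for all a ∈ [K]. Then (π' − π)ᵀ r ≥ [1 − 1/(π(a*)·(e^{η·Δ} − 1) + 1)]·(π* − π)ᵀ r. -/
/-!
Write `f a = e^{η r(a)}` and `Z = Σ p f`, so that `p' = p f / Z`. Then `Z · (p' − p)ᵀ r` is the
`p`-weighted covariance of `f` and `r`, which equals `½ Σ_{a,b} p_a p_b (f_a − f_b)(r_a − r_b)`. Every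
term is nonnegative because `f` is increasing in `r`, so the covariance is at least the row (and
column) of `a*`, i.e. `p(a*) Σ_b p_b (f_{a*} − f_b)(r_{a*} − r_b)`. The reward gap gives
`f_{a*} − f_b ≥ (e^{ηΔ} − 1) f_b` for `b ≠ a*`, and `Σ_b p_b f_b (r(a*) − r_b) = Z (r(a*) − p'ᵀ r)`.
Hence `p(a*) (e^{ηΔ} − 1) (r(a*) − p'ᵀ r) ≤ (p' − p)ᵀ r`, which rearranges to the claim.
-/

open Finset Real

section WeightedCovariance

variable {ι : Type*} [Fintype ι]

def weightedCov (w f g : ι → ℝ) : ℝ :=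
  ∑ i, w i * f i * g i - (∑ i, w i * f i) * ∑ i, w i * g i

theorem two_mul_weightedCov_eq_sum_sum {w : ι → ℝ} (hw : ∑ i, w i = 1) (f g : ι → ℝ) :
    2 * weightedCov w f g = ∑ i, ∑ j, w i * w j * ((f i - f j) * (g i - g j)) := by
  have hrow : ∀ i, ∑ j, w i * w j * ((f i - f j) * (g i - g j)) =
      w i * f i * g i + w i * ∑ j, w j * f j * g j
        - w i * f i * ∑ j, w j * g j - w i * g i * ∑ j, w j * f j := by
    intro i
    rw [mul_sum, mul_sum, mul_sum, ← mul_one (w i * f i * g i), ← hw, mul_sum,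
      ← sum_add_distrib, ← sum_sub_distrib, ← sum_sub_distrib]
    exact sum_congr rfl fun j _ => by ring
  simp only [hrow, sum_sub_distrib, sum_add_distrib, ← sum_mul, hw, weightedCov]
  ring

theorem two_mul_sum_le_sum_sum {M : ι → ι → ℝ} (hM : ∀ i j, 0 ≤ M i j)
    (hsymm : ∀ i j, M i j = M j i) (k : ι) (hk : M k k = 0) :
    2 * ∑ j, M k j ≤ ∑ i, ∑ j, M i j := by
  classical
  have hcol : ∑ i ∈ univ.erase k, M i k = ∑ j, M k j := by
    rw [sum_erase (f := fun i => M i k) _ hk]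
    exact sum_congr rfl fun i _ => hsymm i k
  calc 2 * ∑ j, M k j = ∑ j, M k j + ∑ i ∈ univ.erase k, M i k := by rw [hcol]; ring
    _ ≤ ∑ j, M k j + ∑ i ∈ univ.erase k, ∑ j, M i j := by
      gcongr with i
      exact single_le_sum (fun j _ => hM i j) (mem_univ k)
    _ = ∑ i, ∑ j, M i j := add_sum_erase _ (fun i => ∑ j, M i j) (mem_univ k)

theorem mul_sum_le_weightedCov {w f g : ι → ℝ} (hw : ∀ i, 0 ≤ w i) (hw1 : ∑ i, w i = 1)
    (hfg : Monovary f g) (k : ι) :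
    w k * ∑ j, w j * ((f k - f j) * (g k - g j)) ≤ weightedCov w f g := by
  have h := two_mul_sum_le_sum_sum (M := fun i j => w i * w j * ((f i - f j) * (g i - g j)))
    (fun i j => mul_nonneg (mul_nonneg (hw i) (hw j)) (hfg.sub_mul_sub_nonneg j i))
    (fun i j => by ring) k (by simp)
  rw [← two_mul_weightedCov_eq_sum_sum hw1] at h
  simpa only [mul_assoc, ← mul_sum] using le_of_mul_le_mul_left h two_pos

end WeightedCovariance

theorem sub_one_mul_exp_le_exp_sub_exp {η x y Δ : ℝ} (hη : 0 ≤ η) (h : x + Δ ≤ y) :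
    (exp (η * Δ) - 1) * exp (η * x) ≤ exp (η * y) - exp (η * x) := by
  have : exp (η * Δ) * exp (η * x) ≤ exp (η * y) := by
    rw [← exp_add]
    exact exp_le_exp.2 (by nlinarith)
  linarith

theorem monovary_exp_mul {ι : Type*} (r : ι → ℝ) {η : ℝ} (hη : 0 ≤ η) :
    Monovary (fun i => exp (η * r i)) r :=
  (monovary_self r).comp_monotone_left (exp_monotone.comp (monotone_id.const_mul hη))

section ExponentialWeights

variable {ι : Type*} [Fintype ι] {w r : ι → ℝ} {η Δ : ℝ} {k : ι}

theorem sub_one_mul_sum_le_sum_exp_sub_exp (hw : ∀ i, 0 ≤ w i) (hη : 0 ≤ η)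
    (hk : ∀ j, j ≠ k → r j < r k) (hΔ : ∀ j, j ≠ k → r j + Δ ≤ r k) :
    (exp (η * Δ) - 1) * ∑ j, w j * exp (η * r j) * (r k - r j) ≤
      ∑ j, w j * ((exp (η * r k) - exp (η * r j)) * (r k - r j)) := by
  rw [mul_sum]
  refine sum_le_sum fun j _ => ?_
  rcases eq_or_ne j k with rfl | hj
  · simp
  · have hgap := sub_one_mul_exp_le_exp_sub_exp hη (hΔ j hj)
    have hpos : 0 ≤ w j * (r k - r j) := mul_nonneg (hw j) (sub_nonneg.2 (hk j hj).le)
    calc (exp (η * Δ) - 1) * (w j * exp (η * r j) * (r k - r j))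
        = (exp (η * Δ) - 1) * exp (η * r j) * (w j * (r k - r j)) := by ring
      _ ≤ (exp (η * r k) - exp (η * r j)) * (w j * (r k - r j)) :=
        mul_le_mul_of_nonneg_right hgap hpos
      _ = _ := by ring

theorem mul_sub_one_mul_le_weightedCov_exp (hw : ∀ i, 0 ≤ w i) (hw1 : ∑ i, w i = 1)
    (hη : 0 ≤ η) (hk : ∀ j, j ≠ k → r j < r k) (hΔ : ∀ j, j ≠ k → r j + Δ ≤ r k) :
    w k * (exp (η * Δ) - 1) *
        ((∑ j, w j * exp (η * r j)) * r k - ∑ j, w j * exp (η * r j) * r j) ≤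
      weightedCov w (fun j => exp (η * r j)) r := by
  have hrow : (∑ j, w j * exp (η * r j)) * r k - ∑ j, w j * exp (η * r j) * r j =
      ∑ j, w j * exp (η * r j) * (r k - r j) := by
    simp only [mul_sub, sum_sub_distrib, sum_mul]
  rw [hrow, mul_assoc]
  exact (mul_le_mul_of_nonneg_left (sub_one_mul_sum_le_sum_exp_sub_exp hw hη hk hΔ) (hw k)).trans
    (mul_sum_le_weightedCov hw hw1 (monovary_exp_mul r hη) k)

end ExponentialWeights

theorem mul_sub_one_add_one_pos {t E : ℝ} (ht0 : 0 ≤ t) (ht1 : t ≤ 1) (hE : 0 < E) :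
    0 < t * (E - 1) + 1 := by
  rcases ht1.lt_or_eq with ht1 | rfl
  · nlinarith [mul_nonneg ht0 hE.le]
  · simpa using hE

theorem one_sub_one_div_add_one_mul_le {t y u b : ℝ} (ht : 0 < t + 1)
    (h : t * (y - u) ≤ u - b) : (1 - 1 / (t + 1)) * (y - b) ≤ u - b := by
  rw [one_sub_div ht.ne', div_mul_eq_mul_div, div_le_iff₀ ht]
  linear_combination h

theorem natural_nonuniform_lojasiewicz_discrete_general
    {K : ℕ} (r : Fin K → ℝ)
    (astar : Fin K) (hstar : ∀ a, a ≠ astar → r a < r astar)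
    (Δ : ℝ) (hΔ : Δ = r astar - sSup (r '' {a | a ≠ astar}))
    (p : Fin K → ℝ) (hp : ∀ a, 0 ≤ p a) (hp1 : ∑ a, p a = 1)
    (η : ℝ) (hη : 0 < η)
    (p' : Fin K → ℝ)
    (hp' : ∀ a, p' a = p a * Real.exp (η * r a) / ∑ a', p a' * Real.exp (η * r a')) :
    (1 - 1 / (p astar * (Real.exp (η * Δ) - 1) + 1)) * (r astar - ∑ a, p a * r a) ≤
      ∑ a, p' a * r a - ∑ a, p a * r a := by
  set Z := ∑ a, p a * exp (η * r a)
  set u := ∑ a, p' a * r a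
  have hZ : 0 < Z := by
    obtain ⟨a, -, ha⟩ := exists_ne_zero_of_sum_ne_zero (hp1.symm ▸ one_ne_zero : ∑ a, p a ≠ 0)
    exact sum_pos' (fun a _ => mul_nonneg (hp a) (exp_pos _).le)
      ⟨a, mem_univ a, mul_pos ((hp a).lt_of_ne' ha) (exp_pos _)⟩
  have hZu : Z * u = ∑ a, p a * exp (η * r a) * r a := by
    simp only [u, hp', mul_sum]
    exact sum_congr rfl fun a _ => by field_simp
  have hgap : ∀ a, a ≠ astar → r a + Δ ≤ r astar := fun a ha => by
    have := le_csSup (Set.toFinite (r '' {a | a ≠ astar})).bddAbove ⟨a, ha, rfl⟩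
    linarith
  have hcov := mul_sub_one_mul_le_weightedCov_exp hp hp1 hη.le hstar hgap
  rw [weightedCov, ← hZu] at hcov
  have hkey : p astar * (exp (η * Δ) - 1) * (r astar - u) ≤ u - ∑ a, p a * r a :=
    le_of_mul_le_mul_left (by linear_combination hcov) hZ
  have hp_le_one : p astar ≤ 1 := hp1 ▸ single_le_sum (fun a _ => hp a) (mem_univ astar)
  exact one_sub_one_div_add_one_mul_le (mul_sub_one_add_one_pos (hp astar) hp_le_one (exp_pos _))
    hkey

/-- Natural non-uniform Łojasiewicz inequality (discrete form): for any probability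
distribution `p` on `[K]`, `η > 0`, and the exponentiated update
`p'(a) = p(a)·e^{η·r(a)} / Σ_{a'} p(a')·e^{η·r(a')}`, one has
`(p' − p)ᵀ r ≥ [1 − 1/(p(a*)·(e^{η·Δ} − 1) + 1)]·(r(a*) − pᵀ r)`. -/
theorem natural_nonuniform_lojasiewicz_discrete
    {K : ℕ} (hK : 2 ≤ K) (r : Fin K → ℝ)
    (hr : ∀ a, 0 < r a ∧ r a ≤ 1)
    (astar : Fin K) (hstar : ∀ a, a ≠ astar → r a < r astar)
    (Δ : ℝ) (hΔ : Δ = r astar - sSup (r '' {a | a ≠ astar}))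
    (p : Fin K → ℝ) (hp : ∀ a, 0 ≤ p a) (hp1 : ∑ a, p a = 1)
    (η : ℝ) (hη : 0 < η)
    (p' : Fin K → ℝ)
    (hp' : ∀ a, p' a = p a * Real.exp (η * r a) / ∑ a', p a' * Real.exp (η * r a')) :
    (1 - 1 / (p astar * (Real.exp (η * Δ) - 1) + 1)) * (r astar - ∑ a, p a * r a) ≤
      ∑ a, p' a * r a - ∑ a, p a * r a :=
  natural_nonuniform_lojasiewicz_discrete_general r astar hstar Δ hΔ p hp hp1 η hη p' hp'
end

section
/- NPG upper bound with exact gradients: fix any η > 0 and any θ_1 ∈ ℝ^K, and define θ_{t+1} := θ_t + η·r for all t ≥ 1 (natural policy gradient update). Then for all t ≥ 1, (π* − π_{θ_t})ᵀ r ≤ (π* − π_{θ_1})ᵀ r · exp(−c·(t − 1)), where c := log(π_{θ_1}(a*)·(e^{η·Δ} − 1) + 1) > 0. -/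
open Finset Real Filter

/-!
Write `g = r a* - r ≥ 0` for the reward gaps and `W = exp θ_t`. The update multiplies each
weight by `exp (η r)`, so the sub-optimality at time `t + 1` is the mean of `g` under the tilted
weights `W · exp (η r)`. Since `g` and `exp (η r)` are oppositely ordered, the weighted Chebyshev
inequality on the sub-optimal actions, together with `exp (η r a) · e^{ηΔ} ≤ exp (η r a*)` for
`a ≠ a*`, shows that tilting divides the mean gap by at least `π_{θ_t}(a*) (e^{ηΔ} - 1) + 1`.
The probability of `a*` only grows along the iteration, so this factor is at least `e^c` at
every step.
-/

/-- Weighted **Chebyshev sum inequality**. -/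
theorem AntivaryOn.sum_mul_sum_mul_mul_le_sum_mul_mul_sum {ι : Type*} {s : Finset ι}
    {w f g : ι → ℝ} (hw : ∀ i ∈ s, 0 ≤ w i) (hfg : AntivaryOn f g s) :
    (∑ i ∈ s, w i) * ∑ i ∈ s, w i * f i * g i ≤
      (∑ i ∈ s, w i * f i) * ∑ i ∈ s, w i * g i := by
  set X : ι → ι → ℝ := fun i j => w i * (w j * f j * g j) - w i * f i * (w j * g j)
  have hX : ∑ i ∈ s, ∑ j ∈ s, X i j =
      (∑ i ∈ s, w i) * (∑ i ∈ s, w i * f i * g i) -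
        (∑ i ∈ s, w i * f i) * ∑ i ∈ s, w i * g i := by
    simp only [X, sum_sub_distrib, sum_mul_sum]
  have hsymm : ∑ i ∈ s, ∑ j ∈ s, w i * w j * ((f i - f j) * (g i - g j)) =
      2 * ∑ i ∈ s, ∑ j ∈ s, X i j := by
    rw [two_mul]
    nth_rewrite 2 [sum_comm]
    rw [← sum_add_distrib]
    refine sum_congr rfl fun i _ => ?_
    rw [← sum_add_distrib]
    exact sum_congr rfl fun j _ => by simp only [X]; ring
  have hnonpos : ∑ i ∈ s, ∑ j ∈ s, w i * w j * ((f i - f j) * (g i - g j)) ≤ 0 :=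
    sum_nonpos fun i hi => sum_nonpos fun j hj =>
      mul_nonpos_of_nonneg_of_nonpos (mul_nonneg (hw i hi) (hw j hj))
        (hfg.sub_mul_sub_nonpos hj hi)
  linarith

/-- The mean of `g` under the weights `W * s` is at most its mean under `W` divided by
`p (E - 1) + 1`, where `p` is the share of `a₀` in `W`. -/
theorem sum_mul_mul_mul_add_le_of_antivary {ι : Type*} [Fintype ι] (a₀ : ι)
    {W g s : ι → ℝ} {E : ℝ} (hW : ∀ a, 0 ≤ W a) (hg : ∀ a, 0 ≤ g a) (hg₀ : g a₀ = 0)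
    (hs : ∀ a, a ≠ a₀ → s a * E ≤ s a₀) (hgs : Antivary g s) :
    (∑ a, W a * s a * g a) * (W a₀ * (E - 1) + ∑ a, W a) ≤
      (∑ a, W a * g a) * ∑ a, W a * s a := by
  classical
  set S := univ.erase a₀
  have hcheb : (∑ a ∈ S, W a) * ∑ a ∈ S, W a * g a * s a ≤
      (∑ a ∈ S, W a * g a) * ∑ a ∈ S, W a * s a :=
    (hgs.antivaryOn _).sum_mul_sum_mul_mul_le_sum_mul_mul_sum fun a _ => hW a
  have htilt : E * ∑ a ∈ S, W a * s a * g a ≤ s a₀ * ∑ a ∈ S, W a * g a := by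
    simp only [mul_sum]
    refine sum_le_sum fun a ha => ?_
    have := mul_le_mul_of_nonneg_right (hs a (ne_of_mem_erase ha)) (mul_nonneg (hW a) (hg a))
    linarith
  rw [← add_sum_erase _ _ (mem_univ a₀), ← add_sum_erase _ _ (mem_univ a₀),
    ← add_sum_erase _ _ (mem_univ a₀), ← add_sum_erase _ _ (mem_univ a₀), hg₀]
  simp only [mul_zero, zero_add, mul_right_comm _ (g _) (s _)] at hcheb ⊢
  nlinarith [mul_le_mul_of_nonneg_left htilt (hW a₀)]

section Softmax

variable {K : ℕ}

theorem sum_exp_pos (θ : Fin K → ℝ) (a : Fin K) : 0 < ∑ a', Real.exp (θ a') :=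
  sum_pos (fun _ _ => Real.exp_pos _) ⟨a, mem_univ a⟩

theorem sub_expReward_eq (r θ : Fin K → ℝ) (a₀ : Fin K) :
    r a₀ - expReward r θ =
      (∑ a, Real.exp (θ a) * (r a₀ - r a)) / ∑ a, Real.exp (θ a) := by
  have hZ := (sum_exp_pos θ a₀).ne'
  simp only [expReward, softmax, mul_sub, sum_sub_distrib, ← sum_mul, sub_div,
    mul_div_cancel_left₀ _ hZ, div_mul_eq_mul_div, sum_div]

theorem sub_expReward_nonneg {r : Fin K → ℝ} {a₀ : Fin K} (hr : ∀ a, r a ≤ r a₀)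
    (θ : Fin K → ℝ) : 0 ≤ r a₀ - expReward r θ := by
  rw [sub_expReward_eq]
  exact div_nonneg (sum_nonneg fun a _ => mul_nonneg (Real.exp_pos _).le (sub_nonneg.2 (hr a)))
    (sum_exp_pos θ a₀).le

theorem softmax_le_softmax_add_mul {r : Fin K → ℝ} {a₀ : Fin K} (hr : ∀ a, r a ≤ r a₀)
    {η : ℝ} (hη : 0 ≤ η) (θ : Fin K → ℝ) :
    softmax θ a₀ ≤ softmax (fun a => θ a + η * r a) a₀ := by
  have hsum :
      ∑ a, Real.exp (θ a + η * r a) ≤ Real.exp (η * r a₀) * ∑ a, Real.exp (θ a) := by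
    rw [mul_sum]
    refine sum_le_sum fun a _ => ?_
    rw [Real.exp_add, mul_comm]
    gcongr
    exact hr a
  rw [softmax, softmax, div_le_div_iff₀ (sum_exp_pos θ a₀) (sum_exp_pos _ a₀), Real.exp_add]
  calc Real.exp (θ a₀) * ∑ a, Real.exp (θ a + η * r a)
      ≤ Real.exp (θ a₀) * (Real.exp (η * r a₀) * ∑ a, Real.exp (θ a)) := by gcongr
    _ = _ := by ring

theorem sub_expReward_add_mul_mul_le {r : Fin K → ℝ} {a₀ : Fin K} {Δ η : ℝ}
    (hr : ∀ a, r a ≤ r a₀) (hgap : ∀ a, a ≠ a₀ → r a ≤ r a₀ - Δ) (hη : 0 ≤ η)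
    (θ : Fin K → ℝ) :
    (r a₀ - expReward r (fun a => θ a + η * r a)) *
        (softmax θ a₀ * (Real.exp (η * Δ) - 1) + 1) ≤
      r a₀ - expReward r θ := by
  have hs : ∀ a, a ≠ a₀ →
      Real.exp (η * r a) * Real.exp (η * Δ) ≤ Real.exp (η * r a₀) := fun a ha => by
    rw [← Real.exp_add]
    gcongr
    nlinarith [hgap a ha]
  have hgs : Antivary (fun a => r a₀ - r a) fun a => Real.exp (η * r a) :=
    fun a b hab => by
      have := Real.exp_lt_exp.1 hab
      nlinarith
  have key := sum_mul_mul_mul_add_le_of_antivary a₀ (fun a => (Real.exp_pos (θ a)).le)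
    (fun a => sub_nonneg.2 (hr a)) (sub_self _) hs hgs
  have hZ := sum_exp_pos θ a₀
  have hZ' := sum_exp_pos (fun a => θ a + η * r a) a₀
  have hmass : (softmax θ a₀ * (Real.exp (η * Δ) - 1) + 1) * ∑ a, Real.exp (θ a) =
      Real.exp (θ a₀) * (Real.exp (η * Δ) - 1) + ∑ a, Real.exp (θ a) := by
    rw [softmax]; field_simp
  rw [sub_expReward_eq, sub_expReward_eq, div_mul_eq_mul_div, div_le_div_iff₀ hZ' hZ, mul_assoc,
    hmass]
  simpa only [Real.exp_add] using key

end Softmax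

theorem csSup_image_ne_lt {ι : Type*} [Finite ι] [Nontrivial ι] {r : ι → ℝ} {a₀ : ι}
    (h : ∀ a, a ≠ a₀ → r a < r a₀) : sSup (r '' {a | a ≠ a₀}) < r a₀ := by
  obtain ⟨b, hb⟩ := exists_ne a₀
  obtain ⟨a, ha, hsup⟩ :=
    (Set.Nonempty.image r (s := {a | a ≠ a₀}) ⟨b, hb⟩).csSup_mem (Set.toFinite _)
  exact hsup ▸ h a ha

theorem le_mul_exp_neg_mul_of_mul_exp_le {u : ℕ → ℝ} {c : ℝ}
    (h : ∀ n, u (n + 1) * Real.exp c ≤ u n) (n : ℕ) : u n ≤ u 0 * Real.exp (-c * n) := by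
  have hstep : ∀ k < n, u (k + 1) ≤ Real.exp (-c) * u k := fun k _ => by
    calc u (k + 1) = Real.exp (-c) * (u (k + 1) * Real.exp c) := by
          rw [mul_left_comm, ← Real.exp_add, neg_add_cancel, Real.exp_zero, mul_one]
      _ ≤ Real.exp (-c) * u k := by gcongr; exact h k
  calc u n ≤ Real.exp (-c) ^ n * u 0 := le_geom (Real.exp_pos _).le n hstep
    _ = u 0 * Real.exp (-c * n) := by rw [← Real.exp_nat_mul, mul_comm, mul_comm (n : ℝ)]

/-- Here `θ 0` is the paper's `θ_1`, so the paper's rate `e^{−c(t−1)}` becomes `e^{−c·t}`. -/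
theorem npg_true_gradient_upper_bound_general
    {K : ℕ} (hK : 2 ≤ K) (r : Fin K → ℝ)
    (astar : Fin K) (hstar : ∀ a, a ≠ astar → r a < r astar)
    (Δ : ℝ) (hΔ : Δ = r astar - sSup (r '' {a | a ≠ astar}))
    (η : ℝ) (hη : 0 < η)
    (θ : ℕ → Fin K → ℝ)
    (hupd : ∀ t, θ (t + 1) = fun a => θ t a + η * r a)
    (c : ℝ) (hc : c = Real.log (softmax (θ 0) astar * (Real.exp (η * Δ) - 1) + 1)) :
    0 < c ∧
      ∀ t : ℕ,
        r astar - expReward r (θ t) ≤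
          (r astar - expReward r (θ 0)) * Real.exp (-c * t) := by
  have : Nontrivial (Fin K) := Fin.nontrivial_iff_two_le.2 hK
  have hΔpos : 0 < Δ := hΔ ▸ sub_pos.2 (csSup_image_ne_lt hstar)
  have hgap : ∀ a, a ≠ astar → r a ≤ r astar - Δ := fun a ha => by
    rw [hΔ, sub_sub_cancel]
    exact le_csSup (Set.toFinite _).bddAbove ⟨a, ha, rfl⟩
  have hr : ∀ a, r a ≤ r astar := fun a =>
    (eq_or_ne a astar).elim (fun h => h ▸ le_rfl) fun h => (hstar a h).le
  have hE : 1 < Real.exp (η * Δ) := Real.one_lt_exp_iff.2 (mul_pos hη hΔpos)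
  have hp : 0 < softmax (θ 0) astar := div_pos (Real.exp_pos _) (sum_exp_pos _ astar)
  have hexp_c : Real.exp c = softmax (θ 0) astar * (Real.exp (η * Δ) - 1) + 1 := by
    rw [hc, Real.exp_log (by nlinarith)]
  have hc_pos : 0 < c := by
    rw [← Real.exp_lt_exp, Real.exp_zero, hexp_c]
    nlinarith
  have hmono : Monotone fun t => softmax (θ t) astar := monotone_nat_of_le_succ fun t =>
    (hupd t).symm ▸ softmax_le_softmax_add_mul hr hη.le (θ t)
  refine ⟨hc_pos, le_mul_exp_neg_mul_of_mul_exp_le fun t => ?_⟩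
  calc (r astar - expReward r (θ (t + 1))) * Real.exp c
      ≤ (r astar - expReward r (θ (t + 1))) *
          (softmax (θ t) astar * (Real.exp (η * Δ) - 1) + 1) := by
        rw [hexp_c]
        gcongr
        · exact sub_expReward_nonneg hr _
        · exact hmono (Nat.zero_le t)
    _ ≤ r astar - expReward r (θ t) :=
        hupd t ▸ sub_expReward_add_mul_mul_le hr hgap hη.le (θ t)

/-- NPG upper bound with exact gradients: with the natural policy gradient update
`θ_{t+1} = θ_t + η·r` (here `θ 0` is the paper's `θ_1`, so the paper's `θ_t`
is `θ (t-1)` and the rate `e^{−c(t−1)}` becomes `e^{−c·t}`), one has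
`(π* − π_{θ_t})ᵀ r ≤ (π* − π_{θ_1})ᵀ r · e^{−c·(t−1)}` where
`c = log(π_{θ_1}(a*)·(e^{η·Δ} − 1) + 1) > 0`. -/
theorem npg_true_gradient_upper_bound
    {K : ℕ} (hK : 2 ≤ K) (r : Fin K → ℝ)
    (hr : ∀ a, 0 < r a ∧ r a ≤ 1)
    (astar : Fin K) (hstar : ∀ a, a ≠ astar → r a < r astar)
    (Δ : ℝ) (hΔ : Δ = r astar - sSup (r '' {a | a ≠ astar}))
    (η : ℝ) (hη : 0 < η)
    (θ : ℕ → Fin K → ℝ)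
    (hupd : ∀ t, θ (t + 1) = fun a => θ t a + η * r a)
    (c : ℝ) (hc : c = Real.log (softmax (θ 0) astar * (Real.exp (η * Δ) - 1) + 1)) :
    0 < c ∧
      ∀ t : ℕ,
        r astar - expReward r (θ t) ≤
          (r astar - expReward r (θ 0)) * Real.exp (-c * t) :=
  npg_true_gradient_upper_bound_general hK r astar hstar Δ hΔ η hη θ hupd c hc
end

section
/- On-policy stochastic NPG fails with positive probability: consider an on-policy process with the stochastic NPG update θ_{t+1} := θ_t + η·r̂_{a_t} (η > 0), where r̂_{a_t} is the IS estimate at θ_t with sampled action a_t. Then for every action a ∈ [K] (in particular every sub-optimal action): P(a_t = a for all t ≥ 1) ≥ exp(−(e^{η·r(a)}/(η·r(a)))·(Σ_{a' ≠ a} e^{θ_1(a')})/e^{θ_1(a)}) > 0, and on the event {a_t = a for all t ≥ 1} one has π_{θ_t}(a) → 1 as t → ∞. Hence for every a ∈ [K], with positive probability π_{θ_t}(a) → 1. -/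
open Finset Real Filter MeasureTheory

/-- On-policy importance-sampling (IS) reward estimate for sampled action `a`:
`r̂_a(a') = 1{a' = a}·r(a')/π_θ(a')`. -/
noncomputable def isEst {K : ℕ} (r : Fin K → ℝ) (a : Fin K) (θ : Fin K → ℝ)
    (a' : Fin K) : ℝ :=
  if a' = a then r a' / softmax θ a' else 0

/-! While action `a` is the only one sampled, the iterates follow a deterministic path on
which only `θ(a)` moves, by `η r(a) / π(a) ≥ η r(a)` per step. Conditioning step by step gives
`P(a_s = a for all s < n) = ∏_{s<n} π_s(a)`, and `π_s(a) = (1 + w_s)⁻¹` where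
`w_s = (Σ_{a' ≠ a} e^{θ₁(a')}) / e^{θ_s(a)} ≤ w₁ e^{-s η r(a)}`. So the product is at least
`exp(-Σ_s w_s) ≥ exp(-w₁ e^{η r(a)} / (η r(a)))` for every `n`, and `π_s(a) → 1`. -/

open Topology

lemma exp_neg_le_prod_inv_one_add {ι : Type*} (s : Finset ι) {w : ι → ℝ}
    (hw : ∀ i ∈ s, -1 < w i) {B : ℝ} (hB : ∑ i ∈ s, w i ≤ B) :
    exp (-B) ≤ ∏ i ∈ s, (1 + w i)⁻¹ :=
  calc exp (-B) ≤ exp (-∑ i ∈ s, w i) := exp_le_exp.2 (neg_le_neg hB)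
    _ = ∏ i ∈ s, (exp (w i))⁻¹ := by rw [← sum_neg_distrib, exp_sum]; simp only [exp_neg]
    _ ≤ ∏ i ∈ s, (1 + w i)⁻¹ := by
      refine prod_le_prod (fun _ _ => by positivity) fun i hi => ?_
      have hpos : 0 < 1 + w i := by linarith [hw i hi]
      exact inv_anti₀ hpos (by linarith [add_one_le_exp (w i)])

lemma sum_range_exp_neg_pow_le {c : ℝ} (hc : 0 < c) (n : ℕ) :
    ∑ s ∈ range n, exp (-c) ^ s ≤ exp c / c := by
  have hq : exp (-c) < 1 := exp_lt_one_iff.2 (neg_neg_of_pos hc)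
  have hgeom := geom_sum_Ico_le_of_lt_one (m := 0) (n := n) (exp_pos (-c)).le hq
  rw [← range_eq_Ico, pow_zero] at hgeom
  refine hgeom.trans ((div_le_div_iff₀ (sub_pos.2 hq) hc).2 ?_)
  -- `1 / (1 - e^{-c}) = e^c / (e^c - 1)` and `c ≤ e^c - 1`
  have hinv : exp c * exp (-c) = 1 := by rw [← exp_add, add_neg_cancel, exp_zero]
  nlinarith [add_one_le_exp c]

section Softmax

variable {K : ℕ}

lemma softmax_pos (θ : Fin K → ℝ) (a : Fin K) : 0 < softmax θ a :=
  div_pos (exp_pos _) (sum_pos (fun _ _ => exp_pos _) ⟨a, mem_univ a⟩)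

lemma softmax_le_one (θ : Fin K → ℝ) (a : Fin K) : softmax θ a ≤ 1 :=
  div_le_one_of_le₀ (single_le_sum (fun _ _ => (exp_pos _).le) (mem_univ a))
    (sum_nonneg fun _ _ => (exp_pos _).le)

noncomputable def offMass (θ : Fin K → ℝ) (a : Fin K) : ℝ :=
  ∑ a' ∈ univ.filter (fun a' => a' ≠ a), exp (θ a')

lemma offMass_nonneg (θ : Fin K → ℝ) (a : Fin K) : 0 ≤ offMass θ a :=
  sum_nonneg fun _ _ => (exp_pos _).le

lemma softmax_eq_inv_one_add_offMass_div (θ : Fin K → ℝ) (a : Fin K) :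
    softmax θ a = (1 + offMass θ a / exp (θ a))⁻¹ := by
  have hsum : ∑ a', exp (θ a') = exp (θ a) + offMass θ a := by
    rw [offMass, filter_ne']
    exact (add_sum_erase _ _ (mem_univ a)).symm
  rw [softmax, hsum]
  field_simp

end Softmax

section ConstantAction

variable {K : ℕ} (r : Fin K → ℝ) (a : Fin K) (η : ℝ) (θ₀ : Fin K → ℝ)

noncomputable def npgConstPath : ℕ → Fin K → ℝ
  | 0 => θ₀
  | t + 1 => fun a' => npgConstPath t a' + η * isEst r a (npgConstPath t) a'

lemma eq_npgConstPath_of_forall_lt (θ : ℕ → Fin K → ℝ) (act : ℕ → Fin K) (h0 : θ 0 = θ₀)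
    (hupd : ∀ t, θ (t + 1) = fun a' => θ t a' + η * isEst r (act t) (θ t) a') :
    ∀ n, (∀ s < n, act s = a) → θ n = npgConstPath r a η θ₀ n
  | 0, _ => h0
  | n + 1, h => by
    rw [hupd, eq_npgConstPath_of_forall_lt θ act h0 hupd n fun s hs => h s (by omega),
      h n n.lt_succ_self]
    rfl

lemma npgConstPath_of_ne {a' : Fin K} (ha' : a' ≠ a) (t : ℕ) :
    npgConstPath r a η θ₀ t a' = θ₀ a' := by
  induction t with
  | zero => rfl
  | succ t ih => simp [npgConstPath, isEst, ha', ih]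

lemma offMass_npgConstPath (t : ℕ) : offMass (npgConstPath r a η θ₀ t) a = offMass θ₀ a :=
  sum_congr rfl fun _ ha' => congrArg exp <| npgConstPath_of_ne r a η θ₀ (mem_filter.1 ha').2 t

lemma add_mul_le_npgConstPath (hη : 0 ≤ η) (hr : 0 ≤ r a) (t : ℕ) :
    θ₀ a + t * (η * r a) ≤ npgConstPath r a η θ₀ t a := by
  induction t with
  | zero => simp [npgConstPath]
  | succ t ih =>
    have hstep : r a ≤ r a / softmax (npgConstPath r a η θ₀ t) a :=
      le_div_self hr (softmax_pos _ _) (softmax_le_one _ _)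
    simp only [npgConstPath, isEst]
    push_cast
    nlinarith [mul_le_mul_of_nonneg_left hstep hη]

lemma offMass_div_exp_npgConstPath_le (hη : 0 ≤ η) (hr : 0 ≤ r a) (t : ℕ) :
    offMass θ₀ a / exp (npgConstPath r a η θ₀ t a)
      ≤ offMass θ₀ a / exp (θ₀ a) * exp (-(η * r a)) ^ t := by
  calc offMass θ₀ a / exp (npgConstPath r a η θ₀ t a)
      ≤ offMass θ₀ a / exp (θ₀ a + t * (η * r a)) := by
        gcongr
        · exact offMass_nonneg θ₀ a
        · exact add_mul_le_npgConstPath r a η θ₀ hη hr t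
    _ = offMass θ₀ a / exp (θ₀ a) * exp (-(η * r a)) ^ t := by
        rw [← exp_nat_mul, exp_add, mul_neg, exp_neg]
        field_simp

lemma exp_neg_le_prod_softmax_npgConstPath (hη : 0 < η) (hr : 0 < r a) (n : ℕ) :
    exp (-(exp (η * r a) / (η * r a)) * (offMass θ₀ a / exp (θ₀ a)))
      ≤ ∏ s ∈ range n, softmax (npgConstPath r a η θ₀ s) a := by
  have hw₀ : 0 ≤ offMass θ₀ a / exp (θ₀ a) := div_nonneg (offMass_nonneg θ₀ a) (exp_pos _).le
  simp only [softmax_eq_inv_one_add_offMass_div, offMass_npgConstPath, neg_mul]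
  refine exp_neg_le_prod_inv_one_add _
    (fun s _ => neg_one_lt_zero.trans_le (div_nonneg (offMass_nonneg θ₀ a) (exp_pos _).le)) ?_
  calc ∑ s ∈ range n, offMass θ₀ a / exp (npgConstPath r a η θ₀ s a)
      ≤ ∑ s ∈ range n, offMass θ₀ a / exp (θ₀ a) * exp (-(η * r a)) ^ s :=
        sum_le_sum fun s _ => offMass_div_exp_npgConstPath_le r a η θ₀ hη.le hr.le s
    _ = offMass θ₀ a / exp (θ₀ a) * ∑ s ∈ range n, exp (-(η * r a)) ^ s := by rw [mul_sum]
    _ ≤ offMass θ₀ a / exp (θ₀ a) * (exp (η * r a) / (η * r a)) :=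
        mul_le_mul_of_nonneg_left (sum_range_exp_neg_pow_le (mul_pos hη hr) n) hw₀
    _ = exp (η * r a) / (η * r a) * (offMass θ₀ a / exp (θ₀ a)) := mul_comm _ _

lemma tendsto_softmax_npgConstPath (hη : 0 < η) (hr : 0 < r a) :
    Tendsto (fun t => softmax (npgConstPath r a η θ₀ t) a) atTop (𝓝 1) := by
  have hq : exp (-(η * r a)) < 1 := exp_lt_one_iff.2 (neg_neg_of_pos (mul_pos hη hr))
  have hgeom := (tendsto_pow_atTop_nhds_zero_of_lt_one (exp_pos _).le hq).const_mul
    (offMass θ₀ a / exp (θ₀ a))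
  rw [mul_zero] at hgeom
  have hw : Tendsto (fun t => offMass θ₀ a / exp (npgConstPath r a η θ₀ t a)) atTop (𝓝 0) :=
    squeeze_zero (fun _ => div_nonneg (offMass_nonneg θ₀ a) (exp_pos _).le)
      (offMass_div_exp_npgConstPath_le r a η θ₀ hη.le hr.le) hgeom
  simp only [softmax_eq_inv_one_add_offMass_div, offMass_npgConstPath]
  simpa using (tendsto_const_nhds (x := (1 : ℝ))).add hw |>.inv₀ (by norm_num)

end ConstantAction

section Probability

variable {Ω α : Type*} {mΩ : MeasurableSpace Ω} [MeasurableSpace α] [MeasurableSingletonClass α]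
  (P : Measure Ω) (act : ℕ → Ω → α) (a : α)

lemma measurableSet_forall_lt_eq {m : MeasurableSpace Ω} {n : ℕ}
    (hact : ∀ s < n, Measurable[m] (act s)) :
    MeasurableSet[m] {ω | ∀ s < n, act s ω = a} := by
  simp only [Set.ofPred_forall]
  exact .iInter fun s => .iInter fun hs => hact s hs (measurableSet_singleton a)

lemma measureReal_forall_lt_eq_prod [DecidableEq α] [IsProbabilityMeasure P]
    (F : Filtration ℕ mΩ) (hact : ∀ t, Measurable[F (t + 1)] (act t)) (p : ℕ → ℝ)
    (hcond : ∀ t, ∀ᵐ ω ∂P, (∀ s < t, act s ω = a) →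
      P[(fun ω => if act t ω = a then (1 : ℝ) else 0)|F t] ω = p t) (n : ℕ) :
    P.real {ω | ∀ s < n, act s ω = a} = ∏ s ∈ range n, p s := by
  induction n with
  | zero => simp
  | succ n ih =>
    set A := {ω | ∀ s < n, act s ω = a}
    have hAF : MeasurableSet[F n] A :=
      measurableSet_forall_lt_eq act a fun s hs => (hact s).mono (F.mono hs) le_rfl
    have hA : MeasurableSet A := F.le n _ hAF
    have hB : MeasurableSet (act n ⁻¹' {a}) := F.le _ _ (hact n (measurableSet_singleton a))
    have hind :
        (fun ω => if act n ω = a then (1 : ℝ) else 0) = (act n ⁻¹' {a}).indicator 1 := by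
      ext ω
      by_cases h : act n ω = a <;> simp [h]
    have hsucc : {ω | ∀ s < n + 1, act s ω = a} = act n ⁻¹' {a} ∩ A := by
      ext ω
      simp only [A, Set.mem_ofPred_eq, Set.mem_inter_iff, Set.mem_preimage,
        Set.mem_singleton_iff, Nat.forall_lt_succ_right, and_comm]
    calc P.real {ω | ∀ s < n + 1, act s ω = a}
        = ∫ ω in A, (fun ω => if act n ω = a then (1 : ℝ) else 0) ω ∂P := by
          rw [hind, integral_indicator_one hB, measureReal_restrict_apply hB, hsucc]
      _ = ∫ ω in A, P[(fun ω => if act n ω = a then (1 : ℝ) else 0)|F n] ω ∂P :=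
          (setIntegral_condExp (F.le n) (hind ▸ (integrable_const 1).indicator hB)
            hAF).symm
      _ = ∫ ω in A, p n ∂P :=
          setIntegral_congr_ae hA ((hcond n).mono fun _ h hω => h hω)
      _ = ∏ s ∈ range (n + 1), p s := by
          rw [setIntegral_const, smul_eq_mul, ih, prod_range_succ]

lemma ofReal_le_measure_forall_eq [IsFiniteMeasure P] (hact : ∀ t, Measurable (act t)) {E : ℝ}
    (hE : ∀ n, E ≤ P.real {ω | ∀ s < n, act s ω = a}) :
    ENNReal.ofReal E ≤ P {ω | ∀ t, act t ω = a} := by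
  have hInter : {ω | ∀ t, act t ω = a} = ⋂ n, {ω | ∀ s < n, act s ω = a} := by
    ext ω
    simp only [Set.mem_ofPred_eq, Set.mem_iInter]
    exact ⟨fun h n s _ => h s, fun h t => h (t + 1) t t.lt_succ_self⟩
  rw [hInter, Antitone.measure_iInter (s := fun n => {ω | ∀ s < n, act s ω = a})
    (fun _ _ hmn _ h s hs => h s (hs.trans_le hmn))
    (fun n => (measurableSet_forall_lt_eq act a fun s _ => hact s).nullMeasurableSet)
    ⟨0, measure_ne_top P _⟩]
  exact le_iInf fun n => (ENNReal.ofReal_le_ofReal (hE n)).trans_eq ofReal_measureReal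

end Probability

theorem stochastic_npg_fails_with_positive_probability_general
    {K : ℕ} (r : Fin K → ℝ)
    (hr : ∀ a, 0 < r a ∧ r a ≤ 1)
    (η : ℝ) (hη : 0 < η)
    {Ω : Type*} {mΩ : MeasurableSpace Ω} (P : Measure Ω) [IsProbabilityMeasure P]
    (F : Filtration ℕ mΩ)
    (act : ℕ → Ω → Fin K) (θ : ℕ → Ω → Fin K → ℝ)
    (θinit : Fin K → ℝ) (hθ0 : ∀ ω, θ 0 ω = θinit)
    (hactmeas : ∀ t, Measurable[F (t + 1)] (act t))
    (hcond : ∀ t b, P[(fun ω => if act t ω = b then (1 : ℝ) else 0)|F t]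
      =ᵐ[P] fun ω => softmax (θ t ω) b)
    (hupd : ∀ t ω, θ (t + 1) ω = fun a' =>
      θ t ω a' + η * isEst r (act t ω) (θ t ω) a') :
    ∀ a : Fin K,
      ENNReal.ofReal
          (Real.exp (-(Real.exp (η * r a) / (η * r a)) *
            ((∑ a' ∈ Finset.univ.filter (fun a' => a' ≠ a), Real.exp (θinit a')) /
              Real.exp (θinit a)))) ≤
        P {ω | ∀ t, act t ω = a} ∧
      0 < P {ω | ∀ t, act t ω = a} ∧
      ∀ ω, (∀ t, act t ω = a) →
        Tendsto (fun t => softmax (θ t ω) a) atTop (nhds 1) := by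
  intro a
  have hpath n ω (h : ∀ s < n, act s ω = a) : θ n ω = npgConstPath r a η θinit n :=
    eq_npgConstPath_of_forall_lt r a η θinit (θ · ω) (act · ω) (hθ0 ω) (hupd · ω) n h
  have hprob n : P.real {ω | ∀ s < n, act s ω = a}
      = ∏ s ∈ range n, softmax (npgConstPath r a η θinit s) a :=
    measureReal_forall_lt_eq_prod P act a F hactmeas _
      (fun t => (hcond t a).mono fun ω hω hA =>
        hω.trans (congrArg (softmax · a) (hpath t ω hA))) n
  have hbound := ofReal_le_measure_forall_eq P act a
    (fun t => (hactmeas t).mono (F.le _) le_rfl) fun n =>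
      (exp_neg_le_prod_softmax_npgConstPath r a η θinit hη (hr a).1 n).trans_eq (hprob n).symm
  refine ⟨hbound, (ENNReal.ofReal_pos.2 (exp_pos _)).trans_le hbound, fun ω hω => ?_⟩
  simpa only [hpath _ ω fun s _ => hω s]
    using tendsto_softmax_npgConstPath r a η θinit hη (hr a).1

/-- On-policy stochastic NPG fails with positive probability: for every action `a`,
with the update `θ_{t+1} = θ_t + η·r̂_{a_t}`, the probability of sampling `a`
forever is at least `exp(−(e^{η·r(a)}/(η·r(a)))·(Σ_{a'≠a} e^{θ_1(a')})/e^{θ_1(a)}) > 0`,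
and on that event `π_{θ_t}(a) → 1`. (Here `θ 0` is the paper's `θ_1` and `act t`
the paper's `a_{t+1}`.) -/
theorem stochastic_npg_fails_with_positive_probability
    {K : ℕ} (hK : 2 ≤ K) (r : Fin K → ℝ)
    (hr : ∀ a, 0 < r a ∧ r a ≤ 1)
    (astar : Fin K) (hstar : ∀ a, a ≠ astar → r a < r astar)
    (η : ℝ) (hη : 0 < η)
    {Ω : Type*} {mΩ : MeasurableSpace Ω} (P : Measure Ω) [IsProbabilityMeasure P]
    (F : Filtration ℕ mΩ)
    (act : ℕ → Ω → Fin K) (θ : ℕ → Ω → Fin K → ℝ)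
    (θinit : Fin K → ℝ) (hθ0 : ∀ ω, θ 0 ω = θinit)
    (hθmeas : ∀ t, Measurable[F t] (θ t))
    (hactmeas : ∀ t, Measurable[F (t + 1)] (act t))
    (hcond : ∀ t b, P[(fun ω => if act t ω = b then (1 : ℝ) else 0)|F t]
      =ᵐ[P] fun ω => softmax (θ t ω) b)
    (hupd : ∀ t ω, θ (t + 1) ω = fun a' =>
      θ t ω a' + η * isEst r (act t ω) (θ t ω) a') :
    ∀ a : Fin K,
      ENNReal.ofReal
          (Real.exp (-(Real.exp (η * r a) / (η * r a)) *
            ((∑ a' ∈ Finset.univ.filter (fun a' => a' ≠ a), Real.exp (θinit a')) /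
              Real.exp (θinit a)))) ≤
        P {ω | ∀ t, act t ω = a} ∧
      0 < P {ω | ∀ t, act t ω = a} ∧
      ∀ ω, (∀ t, act t ω = a) →
        Tendsto (fun t => softmax (θ t ω) a) atTop (nhds 1) :=
  stochastic_npg_fails_with_positive_probability_general r hr η hη P F act θ θinit hθ0 hactmeas
    hcond hupd
end
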